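/- arXiv:1411.3569 — 3 statements merged into one kernel-verified Lean document; each statement's English description precedes it below -/
import Mathlib

section
/- The map from semistandard Young tableaux in the alphabet [n] to integer D-tight arrays, sending T to the array A(T) with a_{ij}(T) equal to the number of entries i in row j of T, is a bijection onto the set of integer points of the cone D(n). -/
open Finset

/-- An array `A i j` (0-indexed: entry `i`, row `j`) is upper-triangular of size `n`. -/
def TriangularArray (n : ℕ) (A : ℕ → ℕ → ℕ) : Prop :=
  ∀ i j, (i < j ∨ n ≤ i) → A i j = 0

/-- The D-tightness inequalities defining the cone `D(n)` (0-indexed). -/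
def DTight (n : ℕ) (A : ℕ → ℕ → ℕ) : Prop :=
  ∀ j, j + 1 < n → ∀ i, i < n →
    (∑ k ∈ range (i + 1), A k (j + 1)) ≤ ∑ k ∈ range i, A k j

/-- The array of a semistandard Young tableau: `a_{ij}` is the number of boxes
in row `j` of `T` filled with entry `i`. -/
def tableauArray (μ : YoungDiagram) (T : SemistandardYoungTableau μ) : ℕ → ℕ → ℕ :=
  fun i j => ((range (μ.rowLen j)).filter (fun k => T j k = i)).card

/-- Semistandard Young tableaux in the alphabet `[n]` (entries `< n`, 0-indexed). -/
def SSYTAlphabet (n : ℕ) :=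
  {p : Σ μ : YoungDiagram, SemistandardYoungTableau μ // ∀ c ∈ p.1.cells, p.2 c.1 c.2 < n}

/-! Rows of a semistandard tableau are weakly increasing, so row `j` is determined by the numbers
`a_{ij}` of its entries equal to `i`: the entry in column `k` is `< i` iff
`k < a_{0j} + ⋯ + a_{i-1,j}`. Read backwards, this rule builds a weakly increasing row from any
column of an array. Under this dictionary, column strictness between rows `j` and `j + 1` becomes
exactly the inequalities of `D(n)` (which also force the row lengths to decrease, so the rows fit
a Young diagram), and the bound `j ≤ T j k` forced by column strictness becomes triangularity. -/

/-- `a_{0j} + ⋯ + a_{i-1,j}`; for `A = A(T)`, the number of entries `< i` in row `j` of `T`. -/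
def partialSum (A : ℕ → ℕ → ℕ) (j i : ℕ) : ℕ := ∑ m ∈ range i, A m j

theorem partialSum_mono (A : ℕ → ℕ → ℕ) (j : ℕ) : Monotone (partialSum A j) :=
  fun _ _ h => sum_le_sum_of_subset (range_subset_range.2 h)

theorem dTight_iff {n : ℕ} {A : ℕ → ℕ → ℕ} :
    DTight n A ↔ ∀ j, j + 1 < n → ∀ i < n, partialSum A (j + 1) (i + 1) ≤ partialSum A j i :=
  Iff.rfl

theorem card_filter_lt_eq_sum_card_filter_eq (s : Finset ℕ) (f : ℕ → ℕ) (i : ℕ) :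
    #{k ∈ s | f k < i} = ∑ m ∈ range i, #{k ∈ s | f k = m} := by
  rw [card_eq_sum_card_fiberwise fun k hk => mem_range.2 (mem_filter.1 hk).2]
  refine sum_congr rfl fun m hm => ?_
  rw [filter_filter]
  exact congrArg card
    (filter_congr fun k _ => ⟨And.right, fun h => ⟨h ▸ mem_range.1 hm, h⟩⟩)

theorem lt_iff_lt_card_filter_lt {L : ℕ} {f : ℕ → ℕ} (hf : MonotoneOn f (range L)) {k : ℕ}
    (hk : k < L) (i : ℕ) : f k < i ↔ k < #{m ∈ range L | f m < i} := by
  constructor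
  · intro h
    have : range (k + 1) ⊆ {m ∈ range L | f m < i} := fun m hm => by
      have hmk : m ≤ k := Nat.lt_succ_iff.1 (mem_range.1 hm)
      exact mem_filter.2 ⟨mem_range.2 (by omega),
        (hf (mem_range.2 (by omega)) (mem_range.2 hk) hmk).trans_lt h⟩
    simpa using card_le_card this
  · contrapose!
    intro h
    have : {m ∈ range L | f m < i} ⊆ range k := fun m hm => by
      rw [mem_filter, mem_range] at hm
      by_contra hkm
      exact (hm.2.trans_le h).not_ge
        (hf (mem_range.2 hk) (mem_range.2 hm.1) (by simpa using hkm))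
    simpa using card_le_card this

namespace SemistandardYoungTableau

open YoungDiagram

variable {μ : YoungDiagram} (T : SemistandardYoungTableau μ)

theorem le_entry {j k : ℕ} (hc : (j, k) ∈ μ) : j ≤ T j k := by
  induction j with
  | zero => exact Nat.zero_le _
  | succ j ih =>
    exact (ih (μ.up_left_mem j.le_succ le_rfl hc)).trans_lt (T.col_strict j.lt_succ_self hc)

theorem partialSum_tableauArray (j i : ℕ) :
    partialSum (tableauArray μ T) j i = #{k ∈ range (μ.rowLen j) | T j k < i} :=
  (card_filter_lt_eq_sum_card_filter_eq _ _ _).symm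

theorem entry_lt_iff_lt_partialSum {j k : ℕ} (hc : (j, k) ∈ μ) (i : ℕ) :
    T j k < i ↔ k < partialSum (tableauArray μ T) j i := by
  rw [partialSum_tableauArray]
  exact lt_iff_lt_card_filter_lt
    (fun _ _ _ hb hab => T.row_weak_of_le hab (mem_iff_lt_rowLen.2 (mem_range.1 hb)))
    (mem_iff_lt_rowLen.1 hc) i

theorem dTight_tableauArray (n : ℕ) : DTight n (tableauArray μ T) := by
  refine dTight_iff.2 fun j _ i _ => ?_
  rw [partialSum_tableauArray, partialSum_tableauArray]
  refine card_le_card fun k hk => ?_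
  rw [mem_filter, mem_range] at hk ⊢
  have hc : (j + 1, k) ∈ μ := mem_iff_lt_rowLen.2 hk.1
  have hcol : T j k < T (j + 1) k := T.col_strict j.lt_succ_self hc
  exact ⟨mem_iff_lt_rowLen.1 (μ.up_left_mem j.le_succ le_rfl hc), by omega⟩

variable {n : ℕ} {T}

theorem rowLen_eq_partialSum (hT : ∀ c ∈ μ.cells, T c.1 c.2 < n) (j : ℕ) :
    μ.rowLen j = partialSum (tableauArray μ T) j n := by
  rw [partialSum_tableauArray, filter_true_of_mem, card_range]
  exact fun k hk => hT (j, k) ((mem_cells _).2 (mem_iff_lt_rowLen.2 (mem_range.1 hk)))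

theorem triangularArray_tableauArray (hT : ∀ c ∈ μ.cells, T c.1 c.2 < n) :
    TriangularArray n (tableauArray μ T) := by
  intro i j hij
  refine card_eq_zero.2 (filter_eq_empty_iff.2 fun k hk => ?_)
  have hc : (j, k) ∈ μ := mem_iff_lt_rowLen.2 (mem_range.1 hk)
  have hle : j ≤ T j k := T.le_entry hc
  have hlt : T j k < n := hT (j, k) ((mem_cells _).2 hc)
  omega

theorem sigma_eq_of_tableauArray_eq {ν : YoungDiagram} {U : SemistandardYoungTableau ν}
    (hT : ∀ c ∈ μ.cells, T c.1 c.2 < n) (hU : ∀ c ∈ ν.cells, U c.1 c.2 < n)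
    (h : tableauArray μ T = tableauArray ν U) :
    (⟨μ, T⟩ : Σ μ, SemistandardYoungTableau μ) = ⟨ν, U⟩ := by
  obtain rfl : μ = ν := by
    ext ⟨j, k⟩
    rw [mem_cells, mem_cells, mem_iff_lt_rowLen, mem_iff_lt_rowLen, rowLen_eq_partialSum hT,
      rowLen_eq_partialSum hU, h]
  congr
  ext j k
  by_cases hc : (j, k) ∈ μ
  · exact eq_of_forall_gt_iff fun i => by
      rw [T.entry_lt_iff_lt_partialSum hc, U.entry_lt_iff_lt_partialSum hc, h]
  · rw [T.zeros hc, U.zeros hc]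

end SemistandardYoungTableau

section Inverse

variable {n : ℕ} {A : ℕ → ℕ → ℕ}

theorem TriangularArray.partialSum_eq_of_le (hA : TriangularArray n A) {i : ℕ} (hi : n ≤ i)
    (j : ℕ) : partialSum A j i = partialSum A j n :=
  (sum_subset (range_subset_range.2 hi) fun m _ hm =>
    hA m j (Or.inr (not_lt.1 (mem_range.not.1 hm)))).symm

theorem TriangularArray.partialSum_le (hA : TriangularArray n A) (j i : ℕ) :
    partialSum A j i ≤ partialSum A j n := by
  rcases le_total i n with hi | hi
  · exact partialSum_mono A j hi
  · exact (hA.partialSum_eq_of_le hi j).le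

theorem TriangularArray.partialSum_eq_zero (hA : TriangularArray n A) {j : ℕ} (hj : n ≤ j) :
    partialSum A j n = 0 :=
  sum_eq_zero fun m hm => hA m j (Or.inl ((mem_range.1 hm).trans_le hj))

theorem TriangularArray.lt_of_lt_partialSum (hA : TriangularArray n A) {j k : ℕ}
    (hk : k < partialSum A j n) : j < n := by
  by_contra! hj
  rw [hA.partialSum_eq_zero hj] at hk
  exact Nat.not_lt_zero k hk

theorem DTight.antitone_partialSum (hA : TriangularArray n A) (hD : DTight n A) :
    Antitone fun j => partialSum A j n := by
  refine antitone_nat_of_succ_le fun j => ?_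
  rcases lt_or_ge (j + 1) n with hj | hj
  · obtain ⟨m, rfl⟩ : ∃ m, n = m + 1 := ⟨n - 1, by omega⟩
    exact (dTight_iff.1 hD j hj m m.lt_succ_self).trans (partialSum_mono A j m.le_succ)
  · exact (hA.partialSum_eq_zero hj).trans_le (Nat.zero_le _)

def shapeOfArray (hA : TriangularArray n A) (hD : DTight n A) : YoungDiagram :=
  YoungDiagram.ofRowLens (List.ofFn fun j : Fin n => partialSum A j n)
    (Antitone.sortedGE_ofFn fun _ _ h => hD.antitone_partialSum hA h)

theorem mem_shapeOfArray (hA : TriangularArray n A) (hD : DTight n A) {j k : ℕ} :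
    (j, k) ∈ shapeOfArray hA hD ↔ k < partialSum A j n := by
  simp only [shapeOfArray, YoungDiagram.mem_ofRowLens, List.length_ofFn, List.getElem_ofFn]
  exact ⟨fun ⟨_, hk⟩ => hk, fun hk => ⟨hA.lt_of_lt_partialSum hk, hk⟩⟩

theorem rowLen_shapeOfArray (hA : TriangularArray n A) (hD : DTight n A) (j : ℕ) :
    (shapeOfArray hA hD).rowLen j = partialSum A j n :=
  eq_of_forall_lt_iff fun k => by rw [← YoungDiagram.mem_iff_lt_rowLen, mem_shapeOfArray]

/-- The least `i` with `k < a_{0j} + ⋯ + a_{ij}`: the entry in column `k` of the weakly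
increasing row containing `a_{ij}` copies of each `i`. -/
noncomputable def entryOfArray (A : ℕ → ℕ → ℕ) (j k : ℕ) : ℕ :=
  sInf {i | k < partialSum A j (i + 1)}

theorem entryOfArray_lt_iff {j k : ℕ} (hk : k < partialSum A j n) (i : ℕ) :
    entryOfArray A j k < i ↔ k < partialSum A j i := by
  have hne : {i | k < partialSum A j (i + 1)}.Nonempty :=
    ⟨n, hk.trans_le (partialSum_mono A j n.le_succ)⟩
  rw [entryOfArray, csInf_lt_iff (OrderBot.bddBelow _) hne]
  constructor
  · rintro ⟨m, hm, hmi⟩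
    exact hm.trans_le (partialSum_mono A j hmi)
  · intro h
    obtain ⟨m, rfl⟩ : ∃ m, i = m + 1 := Nat.exists_eq_add_one.2 (Nat.pos_of_ne_zero
      (by rintro rfl; exact Nat.not_lt_zero k h))
    exact ⟨m, h, m.lt_succ_self⟩

theorem entryOfArray_eq_zero (hA : TriangularArray n A) {j k : ℕ} (hk : partialSum A j n ≤ k) :
    entryOfArray A j k = 0 :=
  Nat.sInf_eq_zero.2 (Or.inr (Set.eq_empty_of_forall_notMem fun i hi =>
    (hk.trans_lt (hi.trans_le (hA.partialSum_le j (i + 1)))).false))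

theorem entryOfArray_le_entryOfArray {j k₁ k₂ : ℕ} (h : k₁ ≤ k₂) (hk : k₂ < partialSum A j n) :
    entryOfArray A j k₁ ≤ entryOfArray A j k₂ := by
  by_contra! hlt
  rw [entryOfArray_lt_iff hk] at hlt
  exact lt_irrefl _ ((entryOfArray_lt_iff (h.trans_lt hk) _).2 (h.trans_lt hlt))

theorem entryOfArray_lt_entryOfArray_succ (hA : TriangularArray n A) (hD : DTight n A) {j k : ℕ}
    (hk : k < partialSum A (j + 1) n) : entryOfArray A j k < entryOfArray A (j + 1) k := by
  set e := entryOfArray A (j + 1) k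
  have hkj : k < partialSum A j n := hk.trans_le (hD.antitone_partialSum hA j.le_succ)
  rw [entryOfArray_lt_iff hkj]
  calc k < partialSum A (j + 1) (e + 1) := (entryOfArray_lt_iff hk _).1 e.lt_succ_self
    _ ≤ partialSum A j e :=
      dTight_iff.1 hD j (hA.lt_of_lt_partialSum hk) e ((entryOfArray_lt_iff hk n).2 hk)

theorem entryOfArray_lt_entryOfArray (hA : TriangularArray n A) (hD : DTight n A) {j₁ j₂ k : ℕ}
    (h : j₁ < j₂) (hk : k < partialSum A j₂ n) : entryOfArray A j₁ k < entryOfArray A j₂ k := by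
  induction j₂, h using Nat.le_induction with
  | base => exact entryOfArray_lt_entryOfArray_succ hA hD hk
  | succ j _ ih =>
    exact (ih (hk.trans_le (hD.antitone_partialSum hA j.le_succ))).trans
      (entryOfArray_lt_entryOfArray_succ hA hD hk)

noncomputable def tableauOfArray (hA : TriangularArray n A) (hD : DTight n A) :
    SemistandardYoungTableau (shapeOfArray hA hD) where
  entry := entryOfArray A
  row_weak' h hc := entryOfArray_le_entryOfArray h.le ((mem_shapeOfArray hA hD).1 hc)
  col_strict' h hc := entryOfArray_lt_entryOfArray hA hD h ((mem_shapeOfArray hA hD).1 hc)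
  zeros' hc := entryOfArray_eq_zero hA (not_lt.1 ((mem_shapeOfArray hA hD).not.1 hc))

theorem tableauOfArray_lt (hA : TriangularArray n A) (hD : DTight n A) :
    ∀ c ∈ (shapeOfArray hA hD).cells, tableauOfArray hA hD c.1 c.2 < n := fun c hc =>
  have hk := (mem_shapeOfArray hA hD).1 ((YoungDiagram.mem_cells c).1 hc)
  (entryOfArray_lt_iff hk n).2 hk

theorem tableauArray_tableauOfArray (hA : TriangularArray n A) (hD : DTight n A) :
    tableauArray (shapeOfArray hA hD) (tableauOfArray hA hD) = A := by
  funext i j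
  have hrow : {k ∈ range (partialSum A j n) | entryOfArray A j k = i}
      = Ico (partialSum A j i) (partialSum A j (i + 1)) := by
    ext k
    simp only [mem_filter, mem_range, mem_Ico]
    constructor
    · rintro ⟨hk, rfl⟩
      exact ⟨not_lt.1 ((entryOfArray_lt_iff hk _).not.1 (lt_irrefl _)),
        (entryOfArray_lt_iff hk _).1 (Nat.lt_succ_self _)⟩
    · rintro ⟨hi, hi'⟩
      have hk := hi'.trans_le (hA.partialSum_le j (i + 1))
      exact ⟨hk, le_antisymm (Nat.lt_succ_iff.1 ((entryOfArray_lt_iff hk _).2 hi'))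
        (not_lt.1 fun h => hi.not_gt ((entryOfArray_lt_iff hk _).1 h))⟩
  have hsum : partialSum A j (i + 1) = partialSum A j i + A i j := sum_range_succ _ _
  change #{k ∈ range _ | entryOfArray A j k = i} = A i j
  rw [rowLen_shapeOfArray, hrow, Nat.card_Ico, hsum, Nat.add_sub_cancel_left]

end Inverse

/-- the map `T ↦ A(T)` is a bijection from semistandard Young
tableaux in the alphabet `[n]` onto the integer points of the cone `D(n)`. -/
theorem tableauArray_bijOn (n : ℕ) :
    Set.BijOn (fun p : SSYTAlphabet n => tableauArray p.1.1 p.1.2)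
      Set.univ {A | TriangularArray n A ∧ DTight n A} := by
  refine ⟨?_, ?_, ?_⟩
  · rintro ⟨⟨μ, T⟩, hT⟩ -
    exact ⟨T.triangularArray_tableauArray hT, T.dTight_tableauArray n⟩
  · rintro ⟨⟨μ, T⟩, hT⟩ - ⟨⟨ν, U⟩, hU⟩ - h
    exact Subtype.ext (SemistandardYoungTableau.sigma_eq_of_tableauArray_eq hT hU h)
  · rintro A ⟨hA, hD⟩
    exact ⟨⟨⟨_, tableauOfArray hA hD⟩, tableauOfArray_lt hA hD⟩, trivial,
      tableauArray_tableauOfArray hA hD⟩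
end

section
/- For a semistandard Young tableau T with columns T_1, ..., T_{λ_1} (each column being a subset of [n]), the leading monomial (with respect to the lexicographic order on monomials in x_{ij}) of the product of flag minors Δ_T = Δ_{T_1} ··· Δ_{T_{λ_1}} of a generic n×n matrix (x_{ij}) is the product of the diagonal terms of the minors Δ_{T_1}, ..., Δ_{T_{λ_1}}; equivalently, it equals the monomial X^{A(T)} determined by the array A(T) of T, and it occurs in Δ_T with coefficient 1. -/
open MvPolynomial

noncomputable def genVar (i j : ℕ) : MvPolynomial (ℕ × ℕ) ℂ :=
  MvPolynomial.X (i, j)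

/-- The flag minor `Δ_I`: determinant of the submatrix of the generic matrix
with rows `I = {i_1 < ⋯ < i_k}` and columns `0, …, k-1` (0-indexed). -/
noncomputable def flagMinor (I : Finset ℕ) : MvPolynomial (ℕ × ℕ) ℂ :=
  Matrix.det (Matrix.of fun a b : Fin I.card =>
    genVar ((I.orderIsoOfFin rfl a : ℕ)) (b : ℕ))

/-- The set of entries of the `c`-th column of a semistandard tableau. -/
def columnSet (μ : YoungDiagram) (T : SemistandardYoungTableau μ) (c : ℕ) :
    Finset ℕ :=
  (Finset.range (μ.colLen c)).image (fun r => T r c)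

/-- The tableau monomial `Δ_T = Δ_{T_1} ⋯ Δ_{T_{λ_1}}`: the product of the
flag minors of the columns of `T`. -/
noncomputable def tableauMinor (μ : YoungDiagram) (T : SemistandardYoungTableau μ) :
    MvPolynomial (ℕ × ℕ) ℂ :=
  ∏ c ∈ Finset.range (μ.rowLen 0), flagMinor (columnSet μ T c)

/-- The exponent vector of the monomial `X^{A(T)}`: a box of `T` in row `j`
(0-indexed) filled with entry `i` contributes the variable `x_{ij}`. -/
noncomputable def tableauMonomial (μ : YoungDiagram)
    (T : SemistandardYoungTableau μ) : (ℕ × ℕ) →₀ ℕ :=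
  ∑ c ∈ μ.cells, Finsupp.single (T c.1 c.2, c.1) 1

/-- Lexicographic order on exponent vectors: variable order
`x_{ij} ≻ x_{kl}` iff `i < k` or (`i = k` and `j < l`). -/
def MonGt (a b : (ℕ × ℕ) →₀ ℕ) : Prop :=
  ∃ p : ℕ × ℕ, b p < a p ∧
    ∀ q : ℕ × ℕ, (q.1 < p.1 ∨ (q.1 = p.1 ∧ q.2 < p.2)) → a q = b q

set_option maxHeartbeats 1000000

lemma monGt_def' {a b : (ℕ × ℕ) →₀ ℕ} :
    MonGt a b ↔ ∃ p : ℕ × ℕ, b p < a p ∧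
      ∀ q : ℕ × ℕ, toLex q < toLex p → a q = b q := by
  unfold MonGt
  refine exists_congr fun p => and_congr_right fun _ => forall_congr' fun q => ?_
  rw [Prod.Lex.lt_iff]
  rfl

lemma monGt_irrefl (a : (ℕ × ℕ) →₀ ℕ) : ¬ MonGt a a := by
  rintro ⟨p, hp, -⟩; exact lt_irrefl _ hp

lemma monGt_trans {a b c : (ℕ × ℕ) →₀ ℕ} (h1 : MonGt a b) (h2 : MonGt b c) :
    MonGt a c := by
  rw [monGt_def'] at h1 h2 ⊢
  obtain ⟨p1, hp1, hq1⟩ := h1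
  obtain ⟨p2, hp2, hq2⟩ := h2
  rcases lt_trichotomy (toLex p1) (toLex p2) with h | h | h
  · exact ⟨p1, by rw [← hq2 p1 h]; exact hp1,
      fun q hq => (hq1 q hq).trans (hq2 q (hq.trans h))⟩
  · obtain rfl : p1 = p2 := toLex.injective h
    exact ⟨p1, hp2.trans hp1, fun q hq => (hq1 q hq).trans (hq2 q hq)⟩
  · exact ⟨p2, by rw [hq1 p2 h]; exact hp2,
      fun q hq => (hq1 q (hq.trans h)).trans (hq2 q hq)⟩

lemma monGt_add {a b : (ℕ × ℕ) →₀ ℕ} (c : (ℕ × ℕ) →₀ ℕ) (h : MonGt a b) :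
    MonGt (a + c) (b + c) := by
  obtain ⟨p, hp, hq⟩ := h
  refine ⟨p, ?_, fun q hqq => ?_⟩
  · simp only [Finsupp.add_apply]; omega
  · simp only [Finsupp.add_apply, hq q hqq]

lemma monGt_trichotomy {a b : (ℕ × ℕ) →₀ ℕ} (h : a ≠ b) : MonGt a b ∨ MonGt b a := by
  rw [monGt_def', monGt_def']
  set s : Finset (ℕ × ℕ) := (a.support ∪ b.support).filter (fun p => a p ≠ b p) with hs
  have hsne : s.Nonempty := by
    obtain ⟨p, hp⟩ := Finsupp.ne_iff.mp h
    refine ⟨p, ?_⟩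
    simp only [hs, Finset.mem_filter, Finset.mem_union, Finsupp.mem_support_iff]
    refine ⟨?_, hp⟩
    by_contra hc
    push_neg at hc
    rw [hc.1, hc.2] at hp
    exact hp rfl
  set t := s.image (toLex : ℕ × ℕ → Lex (ℕ × ℕ)) with ht
  have htne : t.Nonempty := hsne.image _
  obtain ⟨p, hps, hpm⟩ := Finset.mem_image.mp (t.min'_mem htne)
  have key : ∀ q : ℕ × ℕ, toLex q < toLex p → a q = b q := by
    intro q hq
    by_contra hne
    have hqs : q ∈ s := by
      simp only [hs, Finset.mem_filter, Finset.mem_union, Finsupp.mem_support_iff]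
      refine ⟨?_, hne⟩
      by_contra hc
      push_neg at hc
      rw [hc.1, hc.2] at hne
      exact hne rfl
    have hle : t.min' htne ≤ toLex q := t.min'_le _ (Finset.mem_image_of_mem _ hqs)
    rw [hpm] at hq
    exact absurd hq (not_lt.mpr hle)
  have hab : a p ≠ b p := (Finset.mem_filter.mp hps).2
  rcases lt_or_gt_of_ne hab with h' | h'
  · exact Or.inr ⟨p, h', fun q hq => (key q hq).symm⟩
  · exact Or.inl ⟨p, h', key⟩

def Lead (p : MvPolynomial (ℕ × ℕ) ℂ) (d : (ℕ × ℕ) →₀ ℕ) : Prop :=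
  MvPolynomial.coeff d p = 1 ∧
    ∀ m, MvPolynomial.coeff m p ≠ 0 → m = d ∨ MonGt d m

lemma lead_one : Lead 1 0 := by
  constructor
  · simp
  · intro m hm
    left
    by_contra h
    rw [MvPolynomial.coeff_one, if_neg (fun he => h he.symm)] at hm
    exact hm rfl

lemma monGt_add_cases {u v dp dq : (ℕ × ℕ) →₀ ℕ}
    (hu : u = dp ∨ MonGt dp u) (hv : v = dq ∨ MonGt dq v) :
    (u = dp ∧ v = dq) ∨ MonGt (dp + dq) (u + v) := by
  rcases hu with hu | hu <;> rcases hv with hv | hv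
  · exact Or.inl ⟨hu, hv⟩
  · right
    rw [hu]
    have := monGt_add dp hv
    rwa [add_comm dq dp, add_comm v dp] at this
  · right
    rw [hv]
    exact monGt_add dq hu
  · right
    refine monGt_trans (monGt_add dq hu) ?_
    have := monGt_add u hv
    rwa [add_comm dq u, add_comm v u] at this

lemma lead_mul {p q : MvPolynomial (ℕ × ℕ) ℂ} {dp dq : (ℕ × ℕ) →₀ ℕ}
    (hp : Lead p dp) (hq : Lead q dq) : Lead (p * q) (dp + dq) := by
  constructor
  · rw [MvPolynomial.coeff_mul, Finset.sum_eq_single ((dp, dq) : ((ℕ×ℕ)→₀ℕ) × ((ℕ×ℕ)→₀ℕ))]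
    · rw [hp.1, hq.1, one_mul]
    · rintro ⟨u, v⟩ hx hne
      by_contra hne0
      have h1 : MvPolynomial.coeff u p ≠ 0 := left_ne_zero_of_mul hne0
      have h2 : MvPolynomial.coeff v q ≠ 0 := right_ne_zero_of_mul hne0
      have hsum : u + v = dp + dq := by simpa using hx
      rcases monGt_add_cases (hp.2 u h1) (hq.2 v h2) with ⟨h3, h4⟩ | hgt
      · exact hne (by rw [h3, h4])
      · rw [hsum] at hgt
        exact monGt_irrefl _ hgt
    · intro h
      exact absurd (by simp) h
  · intro m hm
    rw [MvPolynomial.coeff_mul] at hm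
    obtain ⟨⟨u, v⟩, hx, hne0⟩ := Finset.exists_ne_zero_of_sum_ne_zero hm
    have h1 : MvPolynomial.coeff u p ≠ 0 := left_ne_zero_of_mul hne0
    have h2 : MvPolynomial.coeff v q ≠ 0 := right_ne_zero_of_mul hne0
    have hsum : u + v = m := by simpa using hx
    rcases monGt_add_cases (hp.2 u h1) (hq.2 v h2) with ⟨rfl, rfl⟩ | hgt
    · exact Or.inl hsum.symm
    · rw [hsum] at hgt
      exact Or.inr hgt

lemma lead_prod {s : Finset ℕ} {g : ℕ → MvPolynomial (ℕ × ℕ) ℂ}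
    {d : ℕ → (ℕ × ℕ) →₀ ℕ} (h : ∀ c ∈ s, Lead (g c) (d c)) :
    Lead (∏ c ∈ s, g c) (∑ c ∈ s, d c) := by
  classical
  induction s using Finset.induction with
  | empty => simpa using lead_one
  | @insert x s hx ih =>
    rw [Finset.prod_insert hx, Finset.sum_insert hx]
    exact lead_mul (h _ (Finset.mem_insert_self _ _))
      (ih fun c hc => h c (Finset.mem_insert_of_mem hc))

/-- exponent of the monomial of a system of entries -/
noncomputable def permExp {k : ℕ} (v : Fin k → ℕ) : (ℕ × ℕ) →₀ ℕ :=
  ∑ b : Fin k, Finsupp.single ((v b, (b : ℕ)) : ℕ × ℕ) 1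

lemma permExp_apply {k : ℕ} (v : Fin k → ℕ) (i j : ℕ) :
    permExp v (i, j) = if h : j < k then (if v ⟨j, h⟩ = i then 1 else 0) else 0 := by
  classical
  rw [permExp, Finset.sum_apply']
  simp only [Finsupp.single_apply]
  by_cases h : j < k
  · rw [dif_pos h, Finset.sum_eq_single (⟨j, h⟩ : Fin k)]
    · simp [Prod.ext_iff]
    · intro b _ hb
      rw [if_neg]
      simp only [Prod.mk.injEq, not_and]
      exact fun _ hbj => absurd (Fin.ext hbj) hb
    · intro hs
      exact absurd (Finset.mem_univ _) hs
  · rw [dif_neg h]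
    apply Finset.sum_eq_zero
    intro b _
    rw [if_neg]
    simp only [Prod.mk.injEq, not_and]
    intro _ hbj
    have := b.isLt
    omega

lemma key_monGt {k : ℕ} {f : Fin k → ℕ} (hf : StrictMono f)
    (σ : Equiv.Perm (Fin k)) (hσ : σ ≠ 1) :
    MonGt (permExp f) (permExp (fun b => f (σ b))) := by
  classical
  set S : Finset (Fin k) := Finset.univ.filter (fun b : Fin k => σ b ≠ b) with hS_def
  have hS : S.Nonempty := by
    by_contra h
    rw [Finset.not_nonempty_iff_eq_empty, hS_def, Finset.filter_eq_empty_iff] at h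
    refine hσ (Equiv.ext fun b => ?_)
    rw [Equiv.Perm.one_apply]
    exact not_not.mp (h (Finset.mem_univ b))
  set a : Fin k := S.min' hS with ha_def
  have haS : σ a ≠ a := (Finset.mem_filter.mp (S.min'_mem hS)).2
  have hmin : ∀ b : Fin k, σ b ≠ b → a ≤ b := fun b hb =>
    S.min'_le b (Finset.mem_filter.mpr ⟨Finset.mem_univ _, hb⟩)
  have hfix : ∀ b : Fin k, b < a → σ b = b := fun b hb => by
    by_contra h
    exact absurd (hmin b h) (not_le.mpr hb)
  have hge : ∀ b : Fin k, a ≤ b → a ≤ σ b := by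
    intro b hb
    by_cases h : σ b = b
    · rw [h]; exact hb
    · exact hmin (σ b) (fun hc => h (σ.injective hc))
  have e1 : permExp f ((f a : ℕ), (a : ℕ)) = 1 := by
    rw [permExp_apply, dif_pos a.isLt]
    simp
  have e2 : permExp (fun b => f (σ b)) ((f a : ℕ), (a : ℕ)) = 0 := by
    rw [permExp_apply, dif_pos a.isLt]
    simp only [Fin.eta]
    rw [if_neg]
    exact fun hc => haS (hf.injective hc)
  refine ⟨(f a, (a : ℕ)), ?_, ?_⟩
  · rw [e1, e2]
    norm_num
  · rintro ⟨i, j⟩ hq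
    simp only at hq
    rw [permExp_apply, permExp_apply]
    by_cases h : j < k
    · rw [dif_pos h, dif_pos h]
      rcases hq with hq | ⟨hq1, hq2⟩
      · -- i < f a
        by_cases hja : (⟨j, h⟩ : Fin k) < a
        · simp only [hfix _ hja]
        · push_neg at hja
          have h1 : ¬ f (⟨j, h⟩ : Fin k) = i := fun hc => by
            have := hf.monotone hja
            omega
          have h2 : ¬ f (σ (⟨j, h⟩ : Fin k)) = i := fun hc => by
            have := hf.monotone (hge _ hja)
            omega
          rw [if_neg h1, if_neg h2]
      · -- i = f a, j < ↑a
        have hja : (⟨j, h⟩ : Fin k) < a := by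
          rw [Fin.lt_def]
          exact hq2
        simp only [hfix _ hja]
    · rw [dif_neg h, dif_neg h]

lemma prod_X_eq {α : Type*} (s : Finset α) (v : α → ℕ × ℕ) :
    ∏ b ∈ s, (X (v b) : MvPolynomial (ℕ × ℕ) ℂ)
      = monomial (∑ b ∈ s, Finsupp.single (v b) 1) 1 := by
  classical
  induction s using Finset.induction with
  | empty => simp
  | @insert x s hx ih =>
    rw [Finset.prod_insert hx, Finset.sum_insert hx, ih, X, monomial_mul, one_mul]

noncomputable def diagExp (I : Finset ℕ) : (ℕ × ℕ) →₀ ℕ :=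
  permExp (fun b : Fin I.card => (I.orderIsoOfFin rfl b : ℕ))

lemma lead_flagMinor (I : Finset ℕ) : Lead (flagMinor I) (diagExp I) := by
  classical
  set f : Fin I.card → ℕ := fun b => (I.orderIsoOfFin rfl b : ℕ) with hf_def
  have hf : StrictMono f := by
    intro a b hab
    have := (I.orderIsoOfFin rfl).strictMono hab
    rw [hf_def]
    exact_mod_cast this
  have hdet : flagMinor I = ∑ σ : Equiv.Perm (Fin I.card),
      ((Equiv.Perm.sign σ : ℤ) : MvPolynomial (ℕ × ℕ) ℂ) *
        monomial (permExp (fun b => f (σ b))) 1 := by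
    rw [flagMinor, Matrix.det_apply']
    refine Finset.sum_congr rfl fun σ _ => ?_
    congr 1
    rw [permExp, ← prod_X_eq]
    rfl
  have hcoeff : ∀ m, MvPolynomial.coeff m (flagMinor I)
      = ∑ σ : Equiv.Perm (Fin I.card),
          ((Equiv.Perm.sign σ : ℤ) : ℂ) *
            (if permExp (fun b => f (σ b)) = m then 1 else 0) := by
    intro m
    rw [hdet, MvPolynomial.coeff_sum]
    refine Finset.sum_congr rfl fun σ _ => ?_
    rw [← map_intCast (MvPolynomial.C : ℂ →+* MvPolynomial (ℕ × ℕ) ℂ),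
      MvPolynomial.coeff_C_mul, MvPolynomial.coeff_monomial]
  have hne : ∀ σ : Equiv.Perm (Fin I.card), σ ≠ 1 →
      permExp (fun b => f (σ b)) ≠ permExp f := by
    intro σ hσ h
    have hk := key_monGt hf σ hσ
    rw [h] at hk
    exact monGt_irrefl _ hk
  have hdiag : diagExp I = permExp f := rfl
  constructor
  · rw [hdiag, hcoeff, Finset.sum_eq_single (1 : Equiv.Perm (Fin I.card))]
    · simp [Equiv.Perm.one_apply]
    · intro σ _ hσ
      rw [if_neg (hne σ hσ), mul_zero]
    · intro h
      exact absurd (Finset.mem_univ _) h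
  · intro m hm
    rw [hcoeff m] at hm
    obtain ⟨σ, _, hσ0⟩ := Finset.exists_ne_zero_of_sum_ne_zero hm
    have hif : permExp (fun b => f (σ b)) = m := by
      by_contra h
      rw [if_neg h, mul_zero] at hσ0
      exact hσ0 rfl
    by_cases h1 : σ = 1
    · left
      subst h1
      rw [← hif, hdiag]
      rfl
    · right
      rw [hdiag, ← hif]
      exact key_monGt hf σ h1

lemma diagExp_columnSet (μ : YoungDiagram) (T : SemistandardYoungTableau μ) (c : ℕ) :
    diagExp (columnSet μ T c)
      = ∑ r ∈ Finset.range (μ.colLen c), Finsupp.single ((T r c, r) : ℕ × ℕ) 1 := by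
  classical
  have hcard : (columnSet μ T c).card = μ.colLen c := by
    rw [columnSet, Finset.card_image_of_injOn, Finset.card_range]
    intro r1 h1 r2 h2 hEq
    rw [Finset.mem_coe, Finset.mem_range] at h1 h2
    have hEq' : T r1 c = T r2 c := hEq
    by_contra hne
    rcases Nat.lt_or_ge r1 r2 with h | h
    · have := T.col_strict h (YoungDiagram.mem_iff_lt_colLen.mpr h2)
      omega
    · have hlt : r2 < r1 := by omega
      have := T.col_strict hlt (YoungDiagram.mem_iff_lt_colLen.mpr h1)
      omega
  have hmem : ∀ b : Fin (columnSet μ T c).card, T (b : ℕ) c ∈ columnSet μ T c := by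
    intro b
    simp only [columnSet, Finset.mem_image]
    exact ⟨(b : ℕ), Finset.mem_range.mpr (by rw [← hcard]; exact b.isLt), rfl⟩
  have hmono : StrictMono (fun b : Fin (columnSet μ T c).card => T (b : ℕ) c) := by
    intro b1 b2 hb
    have hb2 : (b2 : ℕ) < μ.colLen c := by rw [← hcard]; exact b2.isLt
    exact T.col_strict hb (YoungDiagram.mem_iff_lt_colLen.mpr hb2)
  have hf : ∀ b : Fin (columnSet μ T c).card,
      ((columnSet μ T c).orderIsoOfFin rfl b : ℕ) = T (b : ℕ) c := by
    intro b
    rw [Finset.coe_orderIsoOfFin_apply,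
      ← Finset.orderEmbOfFin_unique (rfl : (columnSet μ T c).card = _) hmem hmono]
  rw [diagExp, permExp]
  rw [Finset.sum_congr rfl (fun b _ => by rw [hf b])]
  rw [Fin.sum_univ_eq_sum_range
    (fun r => Finsupp.single ((T r c, r) : ℕ × ℕ) 1) ((columnSet μ T c).card), hcard]

lemma cells_sum {M : Type*} [AddCommMonoid M] (μ : YoungDiagram) (F : ℕ × ℕ → M) :
    ∑ x ∈ μ.cells, F x
      = ∑ c ∈ Finset.range (μ.rowLen 0), ∑ r ∈ Finset.range (μ.colLen c), F (r, c) := by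
  classical
  rw [Finset.sum_sigma']
  refine Finset.sum_nbij' (fun x => (⟨x.2, x.1⟩ : Σ _ : ℕ, ℕ)) (fun x => (x.2, x.1))
    ?_ ?_ ?_ ?_ ?_
  · rintro ⟨r, c⟩ hx
    rw [YoungDiagram.mem_cells] at hx
    have h1 : r < μ.colLen c := YoungDiagram.mem_iff_lt_colLen.mp hx
    have h0 : (0, c) ∈ μ := μ.up_left_mem (Nat.zero_le _) le_rfl hx
    have h2 : c < μ.rowLen 0 := YoungDiagram.mem_iff_lt_rowLen.mp h0
    simp only [Finset.mem_sigma, Finset.mem_range]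
    exact ⟨h2, h1⟩
  · rintro ⟨c, r⟩ hx
    simp only [Finset.mem_sigma, Finset.mem_range] at hx
    rw [YoungDiagram.mem_cells]
    exact YoungDiagram.mem_iff_lt_colLen.mpr hx.2
  · rintro ⟨r, c⟩ _
    rfl
  · rintro ⟨c, r⟩ _
    rfl
  · rintro ⟨r, c⟩ _
    rfl

/-- for a semistandard Young tableau `T` in the alphabet `[n]`,
the leading monomial of `Δ_T` with respect to the lexicographic order is
exactly `X^{A(T)}`, and it occurs with coefficient `1`. -/
theorem tableauMinor_leading_monomial (n : ℕ) (μ : YoungDiagram)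
    (T : SemistandardYoungTableau μ) (hT : ∀ c ∈ μ.cells, T c.1 c.2 < n) :
    MvPolynomial.coeff (tableauMonomial μ T) (tableauMinor μ T) = 1 ∧
    ∀ m : (ℕ × ℕ) →₀ ℕ, MvPolynomial.coeff m (tableauMinor μ T) ≠ 0 →
      m ≠ tableauMonomial μ T → MonGt (tableauMonomial μ T) m := by
  have htm : tableauMonomial μ T
      = ∑ c ∈ Finset.range (μ.rowLen 0), diagExp (columnSet μ T c) := by
    rw [tableauMonomial, cells_sum μ]
    exact Finset.sum_congr rfl fun c _ => (diagExp_columnSet μ T c).symm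
  have hlead : Lead (tableauMinor μ T) (tableauMonomial μ T) := by
    rw [tableauMinor, htm]
    exact lead_prod fun c _ => lead_flagMinor _
  refine ⟨hlead.1, fun m hm hne => ?_⟩
  rcases hlead.2 m hm with h | h
  · exact absurd h hne
  · exact h
end

section
/- The n(n+1)/2 arrays A(T) associated to the one-column semistandard Young tableaux filled by the intervals {i, i+1, ..., i+j−1} (for 1 ≤ i, 1 ≤ j, i+j ≤ n+1) form a ℤ-basis of ℤ^{n(n+1)/2}; that is, this set of arrays is unimodular. -/
/-- The triangular index set `{(i,j) : 0 ≤ j ≤ i < n}` (0-indexed), of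
cardinality `n(n+1)/2`; upper-triangular integer arrays are identified with
`ℤ`-valued functions on this set. -/
def TriIdx (n : ℕ) := {p : Fin n × Fin n // p.2 ≤ p.1}

instance (n : ℕ) : Fintype (TriIdx n) := by unfold TriIdx; infer_instance

/-- The array of the one-column tableau filled by the interval
`{a, a+1, …, b}` (0-indexed entries), indexed so that the interval labelled
by `q : TriIdx n` is `{q.2, …, q.1}`: its array has `a_{a+r, r} = 1` for
`0 ≤ r ≤ b - a` and all other entries `0`. -/
def intervalArray (n : ℕ) (q : TriIdx n) : TriIdx n → ℤ :=
  fun p => if (p.1.1 : ℕ) = (q.1.2 : ℕ) + (p.1.2 : ℕ) ∧ p.1.1 ≤ q.1.1 then 1 else 0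

namespace IntervalArraysAux

open Matrix Equiv

/-- The matrix whose rows are the interval arrays. -/
def M (n : ℕ) : Matrix (TriIdx n) (TriIdx n) ℤ := fun q p => intervalArray n q p

/-- The column permutation `(i,j) ↦ (i, i-j)`. -/
def φfun (n : ℕ) : TriIdx n → TriIdx n := fun q =>
  ⟨(q.1.1, ⟨q.1.1.1 - q.1.2.1, lt_of_le_of_lt (Nat.sub_le _ _) q.1.1.2⟩),
    Nat.sub_le _ _⟩

lemma φfun_involutive (n : ℕ) : Function.Involutive (φfun n) := by
  intro q
  have hq : (q.1.2 : ℕ) ≤ (q.1.1 : ℕ) := q.2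
  apply Subtype.ext
  apply Prod.ext
  · rfl
  · apply Fin.ext
    simpa [φfun] using Nat.sub_sub_self hq

/-- The column permutation as a `Perm`. -/
def φ (n : ℕ) : Equiv.Perm (TriIdx n) := (φfun_involutive n).toPerm

noncomputable instance (n : ℕ) : LinearOrder (TriIdx n) :=
  LinearOrder.lift' (fun q : TriIdx n => toLex (q.1.1, q.1.2))
    (fun a b h => by
      apply Subtype.ext
      apply Prod.ext
      · exact congrArg (fun x => (ofLex x).1) h
      · exact congrArg (fun x => (ofLex x).2) h)

lemma lt_def {n : ℕ} {a b : TriIdx n} :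
    a < b ↔ toLex (a.1.1, a.1.2) < toLex (b.1.1, b.1.2) := Iff.rfl

/-- The permuted matrix, explicitly. -/
lemma M_sub_apply (n : ℕ) (q p : TriIdx n) :
    (M n).submatrix id (φ n) q p =
      if (p.1.2 : ℕ) = (q.1.2 : ℕ) ∧ (p.1.1 : ℕ) ≤ (q.1.1 : ℕ) then 1 else 0 := by
  have hp : (p.1.2 : ℕ) ≤ (p.1.1 : ℕ) := p.2
  simp only [Matrix.submatrix_apply, id_eq, M, intervalArray, φ,
    Function.Involutive.coe_toPerm, φfun, Fin.le_def]
  congr 1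
  simp only [eq_iff_iff]
  constructor
  · rintro ⟨h1, h2⟩; omega
  · rintro ⟨h1, h2⟩; omega

lemma blockTri (n : ℕ) :
    ((M n).submatrix id (φ n)).BlockTriangular OrderDual.toDual := by
  intro q p h
  rw [M_sub_apply]
  rw [if_neg]
  rintro ⟨h1, h2⟩
  have hlt : q < p := h
  rw [lt_def, Prod.Lex.lt_iff] at hlt
  rcases hlt with h3 | ⟨h3, h4⟩
  · have h3' : (q.1.1 : ℕ) < (p.1.1 : ℕ) := h3
    omega
  · have := congrArg Fin.val h3
    have h4' : (q.1.2 : ℕ) < (p.1.2 : ℕ) := h4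
    omega

lemma det_sub (n : ℕ) : ((M n).submatrix id (φ n)).det = 1 := by
  rw [Matrix.det_of_lowerTriangular _ (blockTri n)]
  apply Finset.prod_eq_one
  intro q _
  rw [M_sub_apply, if_pos ⟨rfl, le_rfl⟩]

lemma isUnit_det (n : ℕ) : IsUnit (M n).det := by
  have h := det_sub n
  rw [Matrix.det_permute' (φ n) (M n)] at h
  exact isUnit_of_mul_isUnit_right (h ▸ isUnit_one)

end IntervalArraysAux

/-- the `n(n+1)/2` arrays of the one-column interval tableaux
form a `ℤ`-basis of `ℤ^{n(n+1)/2}` (they are linearly independent and span),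
i.e. this set of arrays is unimodular; moreover the index set indeed has
cardinality `n(n+1)/2`. -/
theorem interval_arrays_unimodular (n : ℕ) :
    LinearIndependent ℤ (intervalArray n) ∧
    Submodule.span ℤ (Set.range (intervalArray n)) = ⊤ ∧
    Fintype.card (TriIdx n) = n * (n + 1) / 2 := by
  classical
  open IntervalArraysAux in
  have hdet := IntervalArraysAux.isUnit_det n
  have hMi : (M n) * (M n)⁻¹ = 1 := Matrix.mul_nonsing_inv _ hdet
  have hiM : (M n)⁻¹ * (M n) = 1 := Matrix.nonsing_inv_mul _ hdet
  have hsum : ∀ (c : TriIdx n → ℤ),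
      (∑ i, c i • intervalArray n i) = Matrix.vecMul c (M n) := by
    intro c
    funext p
    simp [Matrix.vecMul, dotProduct, M, Finset.sum_apply]
  refine ⟨?_, ?_, ?_⟩
  · rw [Fintype.linearIndependent_iff]
    intro g hg i
    have h0 : Matrix.vecMul g (M n) = 0 := by rw [← hsum]; exact hg
    have : Matrix.vecMul (Matrix.vecMul g (M n)) (M n)⁻¹ = g := by
      rw [Matrix.vecMul_vecMul, hMi, Matrix.vecMul_one]
    rw [h0, Matrix.zero_vecMul] at this
    exact (congrFun this i).symm
  · rw [eq_top_iff]
    rintro v -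
    have hv : v = ∑ i, (Matrix.vecMul v (M n)⁻¹) i • intervalArray n i := by
      rw [hsum, Matrix.vecMul_vecMul, hiM, Matrix.vecMul_one]
    rw [hv]
    exact Submodule.sum_mem _ fun i _ =>
      Submodule.smul_mem _ _ (Submodule.subset_span ⟨i, rfl⟩)
  · have e : TriIdx n ≃ Sym2 (Fin n) :=
      ((Equiv.prodComm (Fin n) (Fin n)).subtypeEquiv (fun p => Iff.rfl)).trans
        Sym2.sortEquiv.symm
    rw [Fintype.card_congr e, Sym2.card, Fintype.card_fin, Nat.choose_two_right,
      Nat.add_sub_cancel, Nat.mul_comm]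
end
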